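/- arXiv:1207.4696 — 5 statements merged into one kernel-verified Lean document; each statement's English description precedes it below -/
import Mathlib

section
/- Let Λ ⊂ [0,∞) be a set such that #{λ ∈ Λ : λ ≤ X} ≍ X^{3/2}. Fix ε ∈ (0, 1/2). Then the set B̃ = {λ ∈ Λ : λ ≥ 1 and (λ, λ + λ^{−1/2+ε}) ∩ Λ = ∅} satisfies #{λ ∈ B̃ : λ ≤ X} ≤ X^{3/2−ε}; in particular B̃ has density zero in Λ. -/
/-!
An element `l` of `B̃` is followed by a gap of length `l ^ (-1/2 + ε) ≥ X ^ (-1/2 + ε)` free of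
points of `Λ`, so the elements of `B̃` up to `X` are `X ^ (-1/2 + ε)`-separated inside `[1, X]`.
The disjoint intervals `[l, l + X ^ (-1/2 + ε))` they start fill at most `[1, X + 1)`, so there are
at most `X ^ (3/2 - ε)` of them, which is negligible against `#{l ∈ Λ : l ≤ X} ≥ c₁ X ^ (3/2)`.
-/

open Set Filter Topology MeasureTheory

lemma Finset.card_mul_le_sub_of_separated {s : Finset ℝ} {δ a b : ℝ} (hab : a ≤ b)
    (hs : ∀ x ∈ s, a ≤ x ∧ x + δ ≤ b) (hsep : ∀ x ∈ s, ∀ y ∈ s, x < y → x + δ ≤ y) :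
    (s.card : ℝ) * δ ≤ b - a := by
  have hdisj : (s : Set ℝ).PairwiseDisjoint fun x => Set.Ico x (x + δ) := by
    intro x hx y hy hxy
    rcases hxy.lt_or_gt with h | h
    · exact (Set.Iio_disjoint_Ici (hsep x hx y hy h)).mono Set.Ico_subset_Iio_self
        Set.Ico_subset_Ici_self
    · exact ((Set.Iio_disjoint_Ici (hsep y hy x hx h)).mono Set.Ico_subset_Iio_self
        Set.Ico_subset_Ici_self).symm
  have hsub : (⋃ x ∈ s, Set.Ico x (x + δ)) ⊆ Set.Ico a b := by
    simp only [Set.iUnion_subset_iff]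
    exact fun x hx => Set.Ico_subset_Ico (hs x hx).1 (hs x hx).2
  have hvol : ENNReal.ofReal ((s.card : ℝ) * δ) ≤ ENNReal.ofReal (b - a) := by
    calc ENNReal.ofReal ((s.card : ℝ) * δ)
        = ∑ x ∈ s, volume (Set.Ico x (x + δ)) := by
          simp [ENNReal.ofReal_mul (Nat.cast_nonneg _)]
      _ = volume (⋃ x ∈ s, Set.Ico x (x + δ)) :=
          (measure_biUnion_finset hdisj fun _ _ => measurableSet_Ico).symm
      _ ≤ volume (Set.Ico a b) := measure_mono hsub
      _ = ENNReal.ofReal (b - a) := Real.volume_Ico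
  exact (ENNReal.ofReal_le_ofReal_iff (sub_nonneg.mpr hab)).mp hvol

/-- `gapSet Λ e` is `B̃` for `e = -1/2 + ε`. -/
def gapSet (Λ : Set ℝ) (e : ℝ) : Set ℝ :=
  {l ∈ Λ | 1 ≤ l ∧ Ioo l (l + l ^ e) ∩ Λ = ∅}

lemma add_rpow_le_of_mem_gapSet {Λ : Set ℝ} {e x y : ℝ} (hx : x ∈ gapSet Λ e)
    (hy : y ∈ gapSet Λ e) (hxy : x < y) : x + x ^ e ≤ y := by
  by_contra! h
  have : y ∈ Ioo x (x + x ^ e) ∩ Λ := ⟨⟨hxy, h⟩, hy.1⟩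
  simp [hx.2.2] at this

lemma ncard_gapSet_le_rpow {Λ : Set ℝ} {e X : ℝ} (he : e ≤ 0) (hX : 1 ≤ X)
    (hfin : {l ∈ Λ | l ≤ X}.Finite) :
    ({l ∈ gapSet Λ e | l ≤ X}.ncard : ℝ) ≤ X ^ (1 - e) := by
  have hX0 : 0 < X := by linarith
  have hδ : 0 < X ^ e := Real.rpow_pos_of_pos hX0 e
  have hδ1 : X ^ e ≤ 1 := Real.rpow_le_one_of_one_le_of_nonpos hX he
  have hfinB : {l ∈ gapSet Λ e | l ≤ X}.Finite :=
    hfin.subset fun l hl => ⟨hl.1.1, hl.2⟩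
  have hcard : (hfinB.toFinset.card : ℝ) * X ^ e ≤ (X + X ^ e) - 1 := by
    refine Finset.card_mul_le_sub_of_separated (by linarith) ?_ ?_
    · intro x hx
      rw [Finite.mem_toFinset] at hx
      exact ⟨hx.1.2.1, by linarith [hx.2]⟩
    · intro x hx y hy hxy
      rw [Finite.mem_toFinset] at hx hy
      have hxe : X ^ e ≤ x ^ e := Real.rpow_le_rpow_of_nonpos (by linarith [hx.1.2.1]) hx.2 he
      linarith [add_rpow_le_of_mem_gapSet hx.1 hy.1 hxy]
  rw [ncard_eq_toFinset_card _ hfinB, Real.rpow_sub hX0, Real.rpow_one, le_div_iff₀ hδ]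
  linarith

lemma tendsto_div_atTop_nhds_zero_of_le_rpow {f g : ℝ → ℝ} {a c ε : ℝ} (hc : 0 < c)
    (hε : 0 < ε) (hf0 : ∀ X, 0 ≤ f X) (hf : ∀ X, 1 ≤ X → f X ≤ X ^ (a - ε))
    (hg : ∀ X, 1 ≤ X → c * X ^ a ≤ g X) :
    Tendsto (fun X => f X / g X) atTop (𝓝 0) := by
  have hlim : Tendsto (fun X : ℝ => c⁻¹ * X ^ (-ε)) atTop (𝓝 0) := by
    simpa using (tendsto_rpow_neg_atTop hε).const_mul c⁻¹
  have hg0 : ∀ X, 1 ≤ X → 0 < g X := fun X hX =>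
    (mul_pos hc (Real.rpow_pos_of_pos (by linarith) a)).trans_le (hg X hX)
  refine squeeze_zero' ?_ ?_ hlim
  · filter_upwards [eventually_ge_atTop 1] with X hX
    exact div_nonneg (hf0 X) (hg0 X hX).le
  filter_upwards [eventually_ge_atTop 1] with X hX
  have hX0 : 0 < X := by linarith
  calc f X / g X ≤ X ^ (a - ε) / (c * X ^ a) :=
        div_le_div₀ (by positivity) (hf X hX) (by positivity) (hg X hX)
    _ = c⁻¹ * X ^ (-ε) := by
        rw [sub_eq_add_neg, Real.rpow_add hX0]
        field_simp

theorem stmt_8_general (Λ : Set ℝ)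
    (c₁ c₂ : ℝ) (hc₁ : 0 < c₁)
    (hcount : ∀ X : ℝ, 1 ≤ X →
      c₁ * X ^ ((3 : ℝ) / 2) ≤ ({l ∈ Λ | l ≤ X}.ncard : ℝ) ∧
      ({l ∈ Λ | l ≤ X}.ncard : ℝ) ≤ c₂ * X ^ ((3 : ℝ) / 2))
    (ε : ℝ) (hε : 0 < ε) (hε' : ε < 1 / 2) :
    (∀ X : ℝ, 1 ≤ X →
      ({l ∈ {l ∈ Λ | 1 ≤ l ∧ Set.Ioo l (l + l ^ (-(1 : ℝ) / 2 + ε)) ∩ Λ = ∅} |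
        l ≤ X}.ncard : ℝ) ≤ X ^ ((3 : ℝ) / 2 - ε)) ∧
    Filter.Tendsto
      (fun X : ℝ =>
        ({l ∈ {l ∈ Λ | 1 ≤ l ∧ Set.Ioo l (l + l ^ (-(1 : ℝ) / 2 + ε)) ∩ Λ = ∅} |
          l ≤ X}.ncard : ℝ) / ({l ∈ Λ | l ≤ X}.ncard : ℝ))
      Filter.atTop (nhds 0) := by
  have hfin (X : ℝ) (hX : 1 ≤ X) : {l ∈ Λ | l ≤ X}.Finite := by
    have hpos : (0 : ℝ) < c₁ * X ^ ((3 : ℝ) / 2) := by positivity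
    exact finite_of_ncard_pos (Nat.cast_pos.mp (hpos.trans_le (hcount X hX).1))
  have hbound (X : ℝ) (hX : 1 ≤ X) :
      ({l ∈ gapSet Λ (-(1 : ℝ) / 2 + ε) | l ≤ X}.ncard : ℝ) ≤ X ^ ((3 : ℝ) / 2 - ε) := by
    convert ncard_gapSet_le_rpow (e := -(1 : ℝ) / 2 + ε) (by linarith) hX (hfin X hX) using 2
    ring
  exact ⟨hbound, tendsto_div_atTop_nhds_zero_of_le_rpow hc₁ hε (fun _ => Nat.cast_nonneg _)
    hbound fun X hX => (hcount X hX).1⟩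

/-- If #{λ ∈ Λ : λ ≤ X} ≍ X^{3/2} and 0 < ε < 1/2, then the set of λ ∈ Λ, λ ≥ 1,
whose interval (λ, λ + λ^{−1/2+ε}) contains no element of Λ, has at most X^{3/2−ε}
elements up to X; in particular it has density zero in Λ. -/
theorem stmt_8 (Λ : Set ℝ) (hΛ : Λ ⊆ Set.Ici (0 : ℝ))
    (c₁ c₂ : ℝ) (hc₁ : 0 < c₁) (hc₂ : 0 < c₂)
    (hcount : ∀ X : ℝ, 1 ≤ X →
      c₁ * X ^ ((3 : ℝ) / 2) ≤ ({l ∈ Λ | l ≤ X}.ncard : ℝ) ∧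
      ({l ∈ Λ | l ≤ X}.ncard : ℝ) ≤ c₂ * X ^ ((3 : ℝ) / 2))
    (ε : ℝ) (hε : 0 < ε) (hε' : ε < 1 / 2) :
    (∀ X : ℝ, 1 ≤ X →
      ({l ∈ {l ∈ Λ | 1 ≤ l ∧ Set.Ioo l (l + l ^ (-(1 : ℝ) / 2 + ε)) ∩ Λ = ∅} |
        l ≤ X}.ncard : ℝ) ≤ X ^ ((3 : ℝ) / 2 - ε)) ∧
    Filter.Tendsto
      (fun X : ℝ =>
        ({l ∈ {l ∈ Λ | 1 ≤ l ∧ Set.Ioo l (l + l ^ (-(1 : ℝ) / 2 + ε)) ∩ Λ = ∅} |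
          l ≤ X}.ncard : ℝ) / ({l ∈ Λ | l ≤ X}.ncard : ℝ))
      Filter.atTop (nhds 0) :=
  stmt_8_general Λ c₁ c₂ hc₁ hcount ε hε hε'
end

section
/- Let D > 0 be a squarefree integer and k a positive integer. Then the number of integer solutions (x,y) to x² + D y² = k is at most 6·τ(k), where τ(k) is the number of positive divisors of k. -/
/-!
Read `(x, y)` as `x + y √-D`, of norm `x² + D y²`. Dividing a solution of norm `k` by
`g = gcd x y` gives a primitive solution of norm `k / g²`. A primitive solution `(x, y)` of
norm `m` has `y` invertible mod `m`, and `x / y` is a square root of `-D` mod `m`; two primitive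
solutions with the same square root differ by a unit of `ℤ[√-D]`, and there are 4 units if
`D = 1` and 2 otherwise. So the number of solutions is at most 4 resp. 2 times
`∑_{g² ∣ k} r(k / g²)`, where `r(n)` counts square roots of `-D` mod `n`. This sum is the Dirichlet
convolution of the indicator of squares with `r`, which is multiplicative by the Chinese remainder
theorem. At an odd prime power `p^a` the sum is at most `τ(p^a) = a + 1`, since `r(p^e) ≤ 2` for
`p ∤ D` and `r(p^e) = 0` for `p ∣ D`, `e ≥ 2` (`D` squarefree). At a power of 2 it is at most
`τ`, or `3 τ` when `D ≡ 3 mod 4` (then `r(2^e) ≤ 4`), which excludes `D = 1`.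
-/

open Finset
open ArithmeticFunction (IsMultiplicative)

theorem Finset.card_le_of_forall_subset {α : Type*} {s : Finset α} (t : α → Finset α) {n : ℕ}
    (hs : ∀ a ∈ s, s ⊆ t a) (ht : ∀ a, #(t a) ≤ n) : #s ≤ n := by
  obtain rfl | ⟨a, ha⟩ := s.eq_empty_or_nonempty
  · simp
  · exact (card_le_card (hs a ha)).trans (ht a)

theorem Nat.isSquare_mul_iff_of_coprime {m n : ℕ} (h : m.Coprime n) :
    IsSquare (m * n) ↔ IsSquare m ∧ IsSquare n := by
  refine ⟨fun ⟨c, hc⟩ => ?_, fun ⟨hm, hn⟩ => hm.mul hn⟩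
  rw [← sq] at hc
  obtain ⟨a, ha⟩ := exists_eq_pow_of_mul_eq_pow (Nat.isUnit_iff.mpr h) hc
  obtain ⟨b, hb⟩ :=
    exists_eq_pow_of_mul_eq_pow (Nat.isUnit_iff.mpr h.symm) ((mul_comm n m).trans hc)
  exact ⟨⟨a, ha.trans (sq a)⟩, ⟨b, hb.trans (sq b)⟩⟩

theorem Nat.Prime.isSquare_pow_iff {p i : ℕ} (hp : p.Prime) : IsSquare (p ^ i) ↔ Even i := by
  refine ⟨fun ⟨c, hc⟩ => ?_, fun hi => hi.isSquare_pow p⟩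
  obtain ⟨j, -, rfl⟩ := (Nat.dvd_prime_pow hp).mp (Dvd.intro c hc.symm)
  rw [← pow_add] at hc
  exact ⟨j, Nat.pow_right_injective hp.two_le hc⟩

theorem ArithmeticFunction.IsMultiplicative.le_of_forall_mem_primeFactors
    {f g : ArithmeticFunction ℕ} (hf : f.IsMultiplicative) (hg : g.IsMultiplicative) {n : ℕ}
    (hn : n ≠ 0)
    (h : ∀ p ∈ n.primeFactors, f (p ^ n.factorization p) ≤ g (p ^ n.factorization p)) :
    f n ≤ g n := by
  rw [hf.multiplicative_factorization f hn, hg.multiplicative_factorization g hn]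
  exact Finset.prod_le_prod' h

theorem dvd_sub_mul_add_of_dvd_sq_add {R : Type*} [CommRing R] {n D a b : R} (ha : n ∣ a ^ 2 + D)
    (hb : n ∣ b ^ 2 + D) : n ∣ (a - b) * (a + b) := by
  have h := dvd_sub ha hb
  rwa [show a ^ 2 + D - (b ^ 2 + D) = (a - b) * (a + b) by ring] at h

theorem Int.pow_dvd_sub_or_pow_dvd_add_of_dvd_sq_add {p D : ℕ} (hp : p.Prime) (hp2 : p ≠ 2)
    (hpD : ¬p ∣ D) {j : ℕ} (hj : j ≠ 0) {a b : ℤ} (ha : (p : ℤ) ^ j ∣ a ^ 2 + D) (hb : (p : ℤ) ^ j ∣ b ^ 2 + D) :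
    (p : ℤ) ^ j ∣ a - b ∨ (p : ℤ) ^ j ∣ a + b := by
  have hp' : Prime (p : ℤ) := Nat.prime_iff_prime_int.mp hp
  have hab := dvd_sub_mul_add_of_dvd_sq_add ha hb
  have hpa : ¬(p : ℤ) ∣ a := fun hpa => hpD <| Int.natCast_dvd_natCast.mp <|
    (dvd_add_right (dvd_pow hpa two_ne_zero)).mp ((dvd_pow_self _ hj).trans ha)
  have hp2a : ¬(p : ℤ) ∣ 2 * a := fun h => (hp'.dvd_or_dvd h).elim
    (fun h2 => hp2 ((Nat.prime_dvd_prime_iff_eq hp Nat.prime_two).mp (by exact_mod_cast h2))) hpa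
  by_cases hsub : (p : ℤ) ∣ a - b
  · have hadd : ¬(p : ℤ) ∣ a + b := fun hadd => hp2a (by
      have h := dvd_add hsub hadd
      rwa [show a - b + (a + b) = 2 * a by ring] at h)
    exact Or.inl (hp'.pow_dvd_of_dvd_mul_right j hadd hab)
  · exact Or.inr (hp'.pow_dvd_of_dvd_mul_left j hsub hab)

theorem Int.odd_of_two_pow_dvd_sq_add {D j : ℕ} (hD : Odd D) (hj : j ≠ 0) {a : ℤ}
    (ha : (2 : ℤ) ^ j ∣ a ^ 2 + D) : Odd a := by
  have h : Even (a ^ 2 + D) := even_iff_two_dvd.mpr ((dvd_pow_self 2 hj).trans ha)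
  have hD' : Odd (D : ℤ) := hD.natCast
  simp only [Int.even_add, Int.even_pow, ne_eq, OfNat.ofNat_ne_zero, not_false_eq_true,
    and_true] at h
  rwa [← Int.not_even_iff_odd, h, Int.not_even_iff_odd]

theorem Int.two_pow_dvd_sub_or_two_pow_dvd_add {a b : ℤ} (ha : Odd a) (hb : Odd b) {j : ℕ}
    (hab : (2 : ℤ) ^ (j + 2) ∣ (a - b) * (a + b)) :
    (2 : ℤ) ^ (j + 1) ∣ a - b ∨ (2 : ℤ) ^ (j + 1) ∣ a + b := by
  obtain ⟨u, hu⟩ : (2 : ℤ) ∣ a - b := (ha.sub_odd hb).two_dvd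
  obtain ⟨v, hv⟩ : (2 : ℤ) ∣ a + b := (ha.add_odd hb).two_dvd
  have huv : (2 : ℤ) ^ j ∣ u * v := by
    rw [hu, hv, show 2 * u * (2 * v) = 2 ^ 2 * (u * v) by ring, pow_add, mul_comm] at hab
    exact (mul_dvd_mul_iff_left (by norm_num)).mp hab
  have hodd : Odd (u + v) := by
    have : 2 * (u + v) = 2 * a := by rw [mul_add, ← hu, ← hv]; ring
    rwa [mul_left_cancel₀ two_ne_zero this]
  rw [hu, hv, pow_succ', mul_dvd_mul_iff_left two_ne_zero, mul_dvd_mul_iff_left two_ne_zero]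
  rcases Int.even_or_odd u with hu' | hu'
  · refine Or.inl (Int.prime_two.pow_dvd_of_dvd_mul_right j ?_ huv)
    rw [← even_iff_two_dvd, Int.not_even_iff_odd]
    exact (Int.odd_add'.mp hodd).mpr hu'
  · refine Or.inr (Int.prime_two.pow_dvd_of_dvd_mul_left j ?_ huv)
    rwa [← even_iff_two_dvd, Int.not_even_iff_odd]

theorem Int.cases_of_sq_add_mul_sq_eq_one {D a b : ℤ} (hD : 1 ≤ D) (h : a ^ 2 + D * b ^ 2 = 1) :
    b = 0 ∧ (a = 1 ∨ a = -1) ∨ D = 1 ∧ a = 0 ∧ (b = 1 ∨ b = -1) := by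
  have ha : -1 ≤ a ∧ a ≤ 1 := by constructor <;> nlinarith [sq_nonneg b]
  have hb : -1 ≤ b ∧ b ≤ 1 := by constructor <;> nlinarith [sq_nonneg a]
  obtain ⟨ha1, ha2⟩ := ha
  obtain ⟨hb1, hb2⟩ := hb
  interval_cases a <;> interval_cases b <;> simp at h ⊢ <;> omega

theorem ZMod.exists_intCast_eq_of_sq_add_eq_zero {D n : ℕ} {s : ZMod n} (hs : s ^ 2 + D = 0) :
    ∃ a : ℤ, (a : ZMod n) = s ∧ (n : ℤ) ∣ a ^ 2 + D := by
  obtain ⟨a, rfl⟩ := ZMod.intCast_surjective s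
  exact ⟨a, rfl, (ZMod.intCast_zmod_eq_zero_iff_dvd _ _).mp (by push_cast; exact hs)⟩

theorem ZMod.intCast_eq_or_eq_neg_of_dvd {n : ℕ} {a b : ℤ}
    (h : (n : ℤ) ∣ a - b ∨ (n : ℤ) ∣ a + b) : (a : ZMod n) = b ∨ (a : ZMod n) = -b := by
  rcases h with h | h
  · left; simpa [sub_eq_zero] using (ZMod.intCast_zmod_eq_zero_iff_dvd _ n).mpr h
  · right; simpa [add_eq_zero_iff_eq_neg] using (ZMod.intCast_zmod_eq_zero_iff_dvd _ n).mpr h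

theorem ZMod.intCast_eq_zero_or_eq_of_two_pow_dvd {j : ℕ} {x : ℤ} (hx : (2 : ℤ) ^ (j + 1) ∣ x) :
    (x : ZMod (2 ^ (j + 2))) = 0 ∨ (x : ZMod (2 ^ (j + 2))) = 2 ^ (j + 1) := by
  have h0 : (2 : ZMod (2 ^ (j + 2))) ^ (j + 2) = 0 := by
    exact_mod_cast ZMod.natCast_self (2 ^ (j + 2))
  obtain ⟨z, rfl⟩ := hx
  rcases Int.even_or_odd' z with ⟨w, rfl | rfl⟩
  · left; push_cast; linear_combination (w : ZMod (2 ^ (j + 2))) * h0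
  · right; push_cast; linear_combination (w : ZMod (2 ^ (j + 2))) * h0

theorem ZMod.isUnit_intCast_of_isCoprime {m : ℕ} {y : ℤ} (h : IsCoprime (m : ℤ) y) :
    IsUnit (y : ZMod m) := by
  obtain ⟨u, v, huv⟩ := h
  refine IsUnit.of_mul_eq_one (v : ZMod m) ?_
  have := congrArg (Int.cast : ℤ → ZMod m) huv
  push_cast at this
  rw [ZMod.natCast_self] at this
  linear_combination this

def squareIndicator : ArithmeticFunction ℕ :=
  ⟨fun n => if n ≠ 0 ∧ IsSquare n then 1 else 0, by simp⟩

theorem squareIndicator_apply (n : ℕ) :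
    squareIndicator n = if n ≠ 0 ∧ IsSquare n then 1 else 0 := rfl

theorem isMultiplicative_squareIndicator : squareIndicator.IsMultiplicative := by
  refine IsMultiplicative.iff_ne_zero.mpr ⟨by simp [squareIndicator_apply], fun hm hn h => ?_⟩
  simp only [squareIndicator_apply, ne_eq, mul_eq_zero, hm, hn, or_self, not_false_eq_true,
    true_and, Nat.isSquare_mul_iff_of_coprime h]
  split_ifs <;> simp_all

theorem squareIndicator_prime_pow {p : ℕ} (hp : p.Prime) (i : ℕ) :
    squareIndicator (p ^ i) = if Even i then 1 else 0 := by
  simp [squareIndicator_apply, hp.ne_zero, hp.isSquare_pow_iff]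

namespace SqAddMulSq

/-- `n = 0`, where `ZMod 0 = ℤ`, is sent to `0` by hand. -/
noncomputable def sqrtNegCount (D : ℕ) : ArithmeticFunction ℕ :=
  ⟨fun n => if n = 0 then 0 else Nat.card {s : ZMod n // s ^ 2 + D = 0}, if_pos rfl⟩

theorem sqrtNegCount_apply_ne_zero (D : ℕ) {n : ℕ} (hn : n ≠ 0) :
    sqrtNegCount D n = Nat.card {s : ZMod n // s ^ 2 + D = 0} := if_neg hn

theorem sqrtNegCount_apply (D n : ℕ) [NeZero n] :
    sqrtNegCount D n = #{s : ZMod n | s ^ 2 + D = 0} := by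
  rw [sqrtNegCount_apply_ne_zero D (NeZero.ne n), Nat.card_eq_fintype_card, Fintype.card_subtype]

theorem sqrtNegCount_one (D : ℕ) : sqrtNegCount D 1 = 1 := by
  rw [sqrtNegCount_apply_ne_zero D one_ne_zero, Nat.card_eq_one_iff_unique]
  exact ⟨inferInstance, ⟨⟨0, Subsingleton.elim _ _⟩⟩⟩

theorem isMultiplicative_sqrtNegCount (D : ℕ) : (sqrtNegCount D).IsMultiplicative := by
  refine IsMultiplicative.iff_ne_zero.mpr ⟨sqrtNegCount_one D, fun {m n} hm hn h => ?_⟩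
  rw [sqrtNegCount_apply_ne_zero D hm, sqrtNegCount_apply_ne_zero D hn,
    sqrtNegCount_apply_ne_zero D (mul_ne_zero hm hn), ← Nat.card_prod]
  refine Nat.card_congr ((Equiv.subtypeEquiv (ZMod.chineseRemainder h).toEquiv fun s => ?_).trans
    Equiv.subtypeProdEquivProd)
  rw [← (ZMod.chineseRemainder h).injective.eq_iff]
  simp [Prod.ext_iff]

theorem sqrtNegCount_prime_le_two (D : ℕ) {p : ℕ} (hp : p.Prime) : sqrtNegCount D p ≤ 2 := by
  have : Fact p.Prime := ⟨hp⟩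
  rw [sqrtNegCount_apply]
  refine card_le_of_forall_subset (fun t => {t, -t}) (fun t ht s hs => ?_) fun _ => card_le_two
  simp only [mem_filter, mem_univ, true_and, mem_insert, mem_singleton] at ht hs ⊢
  have : (s - t) * (s + t) = 0 := by linear_combination hs - ht
  rcases mul_eq_zero.mp this with h | h
  · exact Or.inl (sub_eq_zero.mp h)
  · exact Or.inr (eq_neg_of_add_eq_zero_left h)

theorem sqrtNegCount_prime_pow_le_two {D p : ℕ} (hp : p.Prime) (hp2 : p ≠ 2) (hpD : ¬p ∣ D)
    {j : ℕ} (hj : j ≠ 0) : sqrtNegCount D (p ^ j) ≤ 2 := by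
  have : NeZero (p ^ j) := ⟨pow_ne_zero _ hp.ne_zero⟩
  rw [sqrtNegCount_apply]
  refine card_le_of_forall_subset (fun t => {t, -t}) (fun t ht s hs => ?_) fun _ => card_le_two
  simp only [mem_filter, mem_univ, true_and, mem_insert, mem_singleton] at ht hs ⊢
  obtain ⟨a, rfl, ha⟩ := ZMod.exists_intCast_eq_of_sq_add_eq_zero hs
  obtain ⟨b, rfl, hb⟩ := ZMod.exists_intCast_eq_of_sq_add_eq_zero ht
  push_cast at ha hb
  exact ZMod.intCast_eq_or_eq_neg_of_dvd (by
    push_cast; exact Int.pow_dvd_sub_or_pow_dvd_add_of_dvd_sq_add hp hp2 hpD hj ha hb)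

theorem sqrtNegCount_prime_pow_eq_zero {D p : ℕ} (hD : Squarefree D) (hp : p.Prime) (hpD : p ∣ D)
    {j : ℕ} (hj : 2 ≤ j) : sqrtNegCount D (p ^ j) = 0 := by
  have : NeZero (p ^ j) := ⟨pow_ne_zero _ hp.ne_zero⟩
  rw [sqrtNegCount_apply, card_eq_zero, filter_eq_empty_iff]
  intro s _ hs
  obtain ⟨a, -, ha⟩ := ZMod.exists_intCast_eq_of_sq_add_eq_zero hs
  have hp' : Prime (p : ℤ) := Nat.prime_iff_prime_int.mp hp
  have hpD' : (p : ℤ) ∣ D := Int.natCast_dvd_natCast.mpr hpD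
  have ha2 : (p : ℤ) * p ∣ a ^ 2 + D := by
    rw [← sq]; push_cast at ha; exact (pow_dvd_pow _ hj).trans ha
  have hpa : (p : ℤ) ∣ a :=
    hp'.dvd_of_dvd_pow ((dvd_add_left hpD').mp ((dvd_mul_right _ _).trans ha2))
  have hp2D : (p : ℤ) * p ∣ D := (dvd_add_right (by rw [sq]; exact mul_dvd_mul hpa hpa)).mp ha2
  exact hp'.not_isUnit (Int.squarefree_natCast.mpr hD _ hp2D)

theorem sqrtNegCount_two_pow_eq_zero {D : ℕ} (hD : D % 4 = 1 ∨ D % 4 = 2) {j : ℕ} (hj : 2 ≤ j) :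
    sqrtNegCount D (2 ^ j) = 0 := by
  rw [sqrtNegCount_apply, card_eq_zero, filter_eq_empty_iff]
  intro s _ hs
  have h4 : 4 ∣ 2 ^ j := by simpa using Nat.pow_dvd_pow 2 hj
  have hs4 := congrArg (ZMod.castHom h4 (ZMod 4)) hs
  rw [map_add, map_pow, map_natCast, map_zero, ← ZMod.natCast_mod D 4] at hs4
  generalize ZMod.castHom h4 (ZMod 4) s = x at hs4
  rcases hD with hD | hD <;> rw [hD] at hs4 <;> revert x hs4 <;> decide

theorem sqrtNegCount_two_pow_le_four {D : ℕ} (hD : Odd D) (j : ℕ) :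
    sqrtNegCount D (2 ^ (j + 2)) ≤ 4 := by
  rw [sqrtNegCount_apply]
  set h : ZMod (2 ^ (j + 2)) := 2 ^ (j + 1)
  refine card_le_of_forall_subset (fun t => {t, t + h, -t, -t + h}) (fun t ht s hs => ?_)
    fun _ => card_le_four
  simp only [mem_filter, mem_univ, true_and, mem_insert, mem_singleton] at ht hs ⊢
  obtain ⟨a, rfl, ha⟩ := ZMod.exists_intCast_eq_of_sq_add_eq_zero hs
  obtain ⟨b, rfl, hb⟩ := ZMod.exists_intCast_eq_of_sq_add_eq_zero ht
  push_cast at ha hb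
  rcases Int.two_pow_dvd_sub_or_two_pow_dvd_add (Int.odd_of_two_pow_dvd_sq_add hD (by omega) ha)
    (Int.odd_of_two_pow_dvd_sq_add hD (by omega) hb) (dvd_sub_mul_add_of_dvd_sq_add ha hb)
    with hd | hd <;>
  rcases ZMod.intCast_eq_zero_or_eq_of_two_pow_dvd hd with he | he <;>
  push_cast at he
  · exact Or.inl (by linear_combination he)
  · exact Or.inr (Or.inl (by linear_combination he))
  · exact Or.inr (Or.inr (Or.inl (by linear_combination he)))
  · exact Or.inr (Or.inr (Or.inr (by linear_combination he)))

noncomputable def sqrtNegSum (D : ℕ) : ArithmeticFunction ℕ := squareIndicator * sqrtNegCount D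

theorem isMultiplicative_sqrtNegSum (D : ℕ) : (sqrtNegSum D).IsMultiplicative :=
  isMultiplicative_squareIndicator.mul (isMultiplicative_sqrtNegCount D)

theorem sqrtNegSum_prime_pow {D p : ℕ} (hp : p.Prime) (a : ℕ) :
    sqrtNegSum D (p ^ a) =
      ∑ i ∈ range (a + 1), (if Even i then 1 else 0) * sqrtNegCount D (p ^ (a - i)) := by
  rw [sqrtNegSum, ArithmeticFunction.mul_apply, Nat.sum_divisorsAntidiagonal
    (fun x y => squareIndicator x * sqrtNegCount D y), Nat.sum_divisors_prime_pow hp]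
  refine sum_congr rfl fun i hi => ?_
  rw [squareIndicator_prime_pow hp, Nat.pow_div (by simpa [Nat.lt_succ_iff] using hi) hp.pos]

theorem sqrtNegSum_prime {D p : ℕ} (hp : p.Prime) : sqrtNegSum D p = sqrtNegCount D p := by
  simpa [sum_range_succ, sqrtNegCount_one] using sqrtNegSum_prime_pow (D := D) hp 1

theorem sqrtNegSum_prime_pow_add_two {D p : ℕ} (hp : p.Prime) (a : ℕ) :
    sqrtNegSum D (p ^ (a + 2)) = sqrtNegCount D (p ^ (a + 2)) + sqrtNegSum D (p ^ a) := by
  rw [sqrtNegSum_prime_pow hp, sqrtNegSum_prime_pow hp, sum_range_succ', sum_range_succ',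
    add_assoc, add_comm]
  simp [Nat.even_add_one, Nat.add_sub_add_right]

theorem sqrtNegSum_prime_pow_le {D p c : ℕ} (hp : p.Prime) (hc : 1 ≤ c)
    (h : ∀ e, 2 ≤ e → sqrtNegCount D (p ^ e) ≤ 2 * c) : ∀ a, sqrtNegSum D (p ^ a) ≤ c * (a + 1)
  | 0 => by simpa using (isMultiplicative_sqrtNegSum D).map_one.le.trans hc
  | 1 => by simpa [sqrtNegSum_prime hp] using (sqrtNegCount_prime_le_two D hp).trans (by omega)
  | a + 2 => by
    rw [sqrtNegSum_prime_pow_add_two hp]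
    have ih := sqrtNegSum_prime_pow_le hp hc h a
    have hr := h (a + 2) (by omega)
    nlinarith

theorem sqrtNegSum_prime_pow_le_of_ne_two {D p : ℕ} (hD : Squarefree D) (hp : p.Prime)
    (hp2 : p ≠ 2) (a : ℕ) : sqrtNegSum D (p ^ a) ≤ a + 1 := by
  refine (sqrtNegSum_prime_pow_le hp le_rfl (fun e he => ?_) a).trans_eq (one_mul _)
  by_cases hpD : p ∣ D
  · rw [sqrtNegCount_prime_pow_eq_zero hD hp hpD he]; omega
  · exact sqrtNegCount_prime_pow_le_two hp hp2 hpD (by omega)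

theorem sqrtNegSum_two_pow_le {D : ℕ} (hD : Squarefree D) (a : ℕ) :
    sqrtNegSum D (2 ^ a) ≤ (if D % 4 = 3 then 3 else 1) * (a + 1) := by
  split_ifs with hD3
  · refine sqrtNegSum_prime_pow_le Nat.prime_two (by norm_num) (fun e he => ?_) a
    obtain ⟨j, rfl⟩ : ∃ j, e = j + 2 := ⟨e - 2, by omega⟩
    exact (sqrtNegCount_two_pow_le_four (Nat.odd_iff.mpr (by omega)) j).trans (by norm_num)
  · have hD4 : ¬4 ∣ D := fun h4 => by simpa using Nat.isUnit_iff.mp (hD 2 h4)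
    refine sqrtNegSum_prime_pow_le Nat.prime_two le_rfl (fun e he => ?_) a
    rw [sqrtNegCount_two_pow_eq_zero (by omega) he]
    omega

theorem sqrtNegSum_le {D k : ℕ} (hD : Squarefree D) (hk : k ≠ 0) :
    sqrtNegSum D k ≤ (if D % 4 = 3 then 3 else 1) * #k.divisors := by
  obtain ⟨v, m, hm, rfl⟩ : ∃ v m, ¬2 ∣ m ∧ 2 ^ v * m = k :=
    ⟨_, _, Nat.not_dvd_ordCompl Nat.prime_two hk, Nat.ordProj_mul_ordCompl_eq_self k 2⟩
  have hm0 : m ≠ 0 := by rintro rfl; exact hm (dvd_zero 2)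
  have hcop : Nat.Coprime (2 ^ v) m :=
    ((Nat.prime_two.coprime_iff_not_dvd).mpr hm).pow_left v
  have hodd : sqrtNegSum D m ≤ ArithmeticFunction.sigma 0 m :=
    (isMultiplicative_sqrtNegSum D).le_of_forall_mem_primeFactors
      ArithmeticFunction.isMultiplicative_sigma hm0 fun p hp => by
        rw [ArithmeticFunction.sigma_zero_apply_prime_pow (Nat.prime_of_mem_primeFactors hp)]
        refine sqrtNegSum_prime_pow_le_of_ne_two hD (Nat.prime_of_mem_primeFactors hp) ?_ _
        rintro rfl
        exact hm (Nat.dvd_of_mem_primeFactors hp)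
  rw [← ArithmeticFunction.sigma_zero_apply,
    (isMultiplicative_sqrtNegSum D).map_mul_of_coprime hcop,
    ArithmeticFunction.isMultiplicative_sigma.map_mul_of_coprime hcop,
    ArithmeticFunction.sigma_zero_apply_prime_pow Nat.prime_two, ← mul_assoc]
  exact Nat.mul_le_mul (sqrtNegSum_two_pow_le hD v) hodd

noncomputable def solutions (D k : ℕ) : Finset (ℤ × ℤ) :=
  {p ∈ Icc (-(k : ℤ)) k ×ˢ Icc (-(k : ℤ)) k | p.1 ^ 2 + D * p.2 ^ 2 = k}

noncomputable def primitiveSolutions (D k : ℕ) : Finset (ℤ × ℤ) :=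
  {p ∈ solutions D k | Int.gcd p.1 p.2 = 1}

theorem mem_solutions {D k : ℕ} (hD : 0 < D) {p : ℤ × ℤ} :
    p ∈ solutions D k ↔ p.1 ^ 2 + D * p.2 ^ 2 = k := by
  refine ⟨fun hp => (mem_filter.mp hp).2, fun hp => mem_filter.mpr ⟨?_, hp⟩⟩
  have hD' : (1 : ℤ) ≤ D := by exact_mod_cast hD
  have h1 : p.1 ^ 2 ≤ k := by nlinarith [sq_nonneg p.2]
  have h2 : p.2 ^ 2 ≤ k := by nlinarith [sq_nonneg p.1, sq_nonneg p.2]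
  simp only [mem_product, mem_Icc]
  refine ⟨⟨?_, ?_⟩, ?_, ?_⟩ <;>
    nlinarith [Int.le_self_sq p.1, Int.le_self_sq (-p.1), Int.le_self_sq p.2, Int.le_self_sq (-p.2)]

theorem div_gcd_mem_primitiveSolutions {D k : ℕ} (hD : 0 < D) (hk : k ≠ 0) {p : ℤ × ℤ}
    (hp : p ∈ solutions D k) :
    Int.gcd p.1 p.2 ^ 2 ∣ k ∧ (p.1 / Int.gcd p.1 p.2, p.2 / Int.gcd p.1 p.2) ∈
      primitiveSolutions D (k / Int.gcd p.1 p.2 ^ 2) := by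
  set g := Int.gcd p.1 p.2
  rw [mem_solutions hD] at hp
  have hg : g ≠ 0 := fun hg => by
    obtain ⟨h1, h2⟩ := Int.gcd_eq_zero_iff.mp hg
    rw [h1, h2] at hp
    exact hk (by exact_mod_cast (by simpa using hp.symm : (k : ℤ) = 0))
  obtain ⟨x, hx⟩ : (g : ℤ) ∣ p.1 := Int.gcd_dvd_left _ _
  obtain ⟨y, hy⟩ : (g : ℤ) ∣ p.2 := Int.gcd_dvd_right _ _
  have hkxy : (k : ℤ) = (g : ℤ) ^ 2 * (x ^ 2 + D * y ^ 2) := by rw [← hp, hx, hy]; ring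
  have hdvd : g ^ 2 ∣ k := Int.natCast_dvd_natCast.mp ⟨_, by push_cast; exact hkxy⟩
  have hg' : (g : ℤ) ≠ 0 := by exact_mod_cast hg
  refine ⟨hdvd, mem_filter.mpr ⟨(mem_solutions hD).mpr ?_, Int.gcd_div_gcd_div_gcd (by omega)⟩⟩
  dsimp only
  rw [Int.natCast_div, hkxy, hx, hy]
  push_cast
  rw [Int.mul_ediv_cancel_left _ (pow_ne_zero 2 hg'), Int.mul_ediv_cancel_left _ hg',
    Int.mul_ediv_cancel_left _ hg']

theorem card_solutions_le_sum {D k : ℕ} (hD : 0 < D) (hk : k ≠ 0) :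
    #(solutions D k) ≤
      ∑ x ∈ k.divisorsAntidiagonal, squareIndicator x.1 * #(primitiveSolutions D x.2) := by
  let g : ℤ × ℤ → ℕ := fun p => Int.gcd p.1 p.2
  have hsplit : ∀ p : ℤ × ℤ, (g p : ℤ) * (p.1 / g p) = p.1 ∧ (g p : ℤ) * (p.2 / g p) = p.2 :=
    fun p => ⟨Int.mul_ediv_cancel' (Int.gcd_dvd_left _ _),
      Int.mul_ediv_cancel' (Int.gcd_dvd_right _ _)⟩
  calc #(solutions D k)
      ≤ #({x ∈ k.divisorsAntidiagonal | IsSquare x.1}.sigma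
          fun x => primitiveSolutions D x.2) := by
        refine card_le_card_of_injOn
          (fun p => ⟨(g p ^ 2, k / g p ^ 2), (p.1 / g p, p.2 / g p)⟩) (fun p hp => ?_) ?_
        · obtain ⟨hdvd, hprim⟩ := div_gcd_mem_primitiveSolutions hD hk hp
          refine mem_sigma.mpr ⟨mem_filter.mpr ⟨?_, g p, sq _⟩, hprim⟩
          exact Nat.mem_divisorsAntidiagonal.mpr ⟨Nat.mul_div_cancel' hdvd, hk⟩
        · intro p _ q _ hpq
          simp only [Sigma.mk.inj_iff, Prod.mk.injEq, heq_eq_eq] at hpq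
          obtain ⟨⟨hgpq, -⟩, h1, h2⟩ := hpq
          have hgpq : g p = g q := Nat.pow_left_injective two_ne_zero hgpq
          exact Prod.ext (by rw [← (hsplit p).1, ← (hsplit q).1, h1, hgpq])
            (by rw [← (hsplit p).2, ← (hsplit q).2, h2, hgpq])
    _ = ∑ x ∈ k.divisorsAntidiagonal, squareIndicator x.1 * #(primitiveSolutions D x.2) := by
        rw [card_sigma, sum_filter]
        refine sum_congr rfl fun x hx => ?_
        have hx0 : x.1 ≠ 0 := Nat.ne_zero_of_mul_ne_zero_left
          ((Nat.mem_divisorsAntidiagonal.mp hx).1 ▸ hk)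
        by_cases hsq : IsSquare x.1 <;> simp [squareIndicator_apply, hx0, hsq]

theorem isCoprime_of_mem_primitiveSolutions {D m : ℕ} (hD : 0 < D) {p : ℤ × ℤ}
    (hp : p ∈ primitiveSolutions D m) : IsCoprime (m : ℤ) p.2 := by
  obtain ⟨hsol, hgcd⟩ := mem_filter.mp hp
  rw [← (mem_solutions hD).mp hsol, show p.1 ^ 2 + D * p.2 ^ 2 = p.1 ^ 2 + p.2 * (D * p.2) by ring]
  exact ((Int.isCoprime_iff_gcd_eq_one.mpr hgcd).symm.pow_right.add_mul_left_right _).symm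

noncomputable def unitOrbit (D : ℕ) (p : ℤ × ℤ) : Finset (ℤ × ℤ) :=
  if D = 1 then {p, -p, (-p.2, p.1), (p.2, -p.1)} else {p, -p}

theorem card_unitOrbit_le (D : ℕ) (p : ℤ × ℤ) :
    #(unitOrbit D p) ≤ if D = 1 then 4 else 2 := by
  unfold unitOrbit
  split_ifs
  exacts [card_le_four, card_le_two]

/-- If `(q.1 + q.2 √-D) (p.1 - p.2 √-D) = m (a + b √-D)` then `a + b √-D` has norm one, so it is a
unit of `ℤ[√-D]` and `q` is obtained from `p` by multiplication with it. -/
theorem mem_unitOrbit_of_dvd {D : ℕ} (hD : 0 < D) {m : ℤ} (hm : m ≠ 0) {p q : ℤ × ℤ}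
    (hp : p.1 ^ 2 + D * p.2 ^ 2 = m) (hq : q.1 ^ 2 + D * q.2 ^ 2 = m)
    (hb : m ∣ p.1 * q.2 - q.1 * p.2) (ha : m ∣ p.1 * q.1 + D * p.2 * q.2) :
    q ∈ unitOrbit D p := by
  obtain ⟨b, hb⟩ := hb
  obtain ⟨a, ha⟩ := ha
  have hnorm : a ^ 2 + D * b ^ 2 = 1 := by
    refine mul_left_cancel₀ (pow_ne_zero 2 hm) ?_
    linear_combination (q.1 ^ 2 + D * q.2 ^ 2) * hp + m * hq
      - (p.1 * q.1 + D * p.2 * q.2 + m * a) * ha - D * (p.1 * q.2 - q.1 * p.2 + m * b) * hb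
  have hq1 : q.1 = a * p.1 - D * b * p.2 :=
    mul_left_cancel₀ hm (by linear_combination p.1 * ha - q.1 * hp - D * p.2 * hb)
  have hq2 : q.2 = a * p.2 + b * p.1 :=
    mul_left_cancel₀ hm (by linear_combination p.2 * ha + p.1 * hb - q.2 * hp)
  unfold unitOrbit
  rcases Int.cases_of_sq_add_mul_sq_eq_one (by exact_mod_cast hD) hnorm with
    ⟨rfl, rfl | rfl⟩ | ⟨hD1, rfl, rfl | rfl⟩
  · split_ifs <;> simp [Prod.ext_iff, hq1, hq2]
  · split_ifs <;> simp [Prod.ext_iff, hq1, hq2]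
  all_goals
    obtain rfl : D = 1 := by exact_mod_cast hD1
    simp [Prod.ext_iff, hq1, hq2]

theorem dvd_of_intCast_eq_mul {D m : ℕ} {s : ZMod m} (hs : s ^ 2 + D = 0) {p q : ℤ × ℤ}
    (hp : (p.1 : ZMod m) = s * p.2) (hq : (q.1 : ZMod m) = s * q.2) :
    (m : ℤ) ∣ p.1 * q.2 - q.1 * p.2 ∧ (m : ℤ) ∣ p.1 * q.1 + D * p.2 * q.2 := by
  simp only [← ZMod.intCast_zmod_eq_zero_iff_dvd]
  push_cast
  rw [hp, hq]
  exact ⟨by ring, by linear_combination (p.2 : ZMod m) * q.2 * hs⟩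

theorem card_primitiveSolutions_le {D m : ℕ} (hD : 0 < D) (hm : m ≠ 0) :
    #(primitiveSolutions D m) ≤ (if D = 1 then 4 else 2) * sqrtNegCount D m := by
  have : NeZero m := ⟨hm⟩
  rw [sqrtNegCount_apply]
  have hinv : ∀ p ∈ primitiveSolutions D m, (p.2 : ZMod m) * (p.2 : ZMod m)⁻¹ = 1 := fun p hp =>
    ZMod.mul_inv_of_unit _ (ZMod.isUnit_intCast_of_isCoprime
      (isCoprime_of_mem_primitiveSolutions hD hp))
  have hsol : ∀ p ∈ primitiveSolutions D m, p.1 ^ 2 + D * p.2 ^ 2 = m := fun p hp =>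
    (mem_solutions hD).mp (mem_filter.mp hp).1
  have hslope : ∀ p ∈ primitiveSolutions D m,
      (p.1 : ZMod m) = (p.1 * (p.2 : ZMod m)⁻¹) * p.2 := fun p hp => by
    rw [mul_assoc, mul_comm _ (p.2 : ZMod m), hinv p hp, mul_one]
  refine card_le_mul_card_image_of_maps_to
    (f := fun p : ℤ × ℤ => (p.1 : ZMod m) * (p.2 : ZMod m)⁻¹) (fun p hp => ?_) _ fun s hs => ?_
  · have h0 : ((p.1 ^ 2 + D * p.2 ^ 2 : ℤ) : ZMod m) = 0 := by
      rw [hsol p hp]; exact_mod_cast ZMod.natCast_self m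
    push_cast at h0
    simp only [mem_filter, mem_univ, true_and]
    linear_combination ((p.2 : ZMod m)⁻¹) ^ 2 * h0 - D * (1 + p.2 * (p.2 : ZMod m)⁻¹) * hinv p hp
  · refine card_le_of_forall_subset (unitOrbit D) (fun p hp q hq => ?_) (card_unitOrbit_le D)
    obtain ⟨hp, hps⟩ := mem_filter.mp hp
    obtain ⟨hq, hqs⟩ := mem_filter.mp hq
    obtain ⟨hb, ha⟩ := dvd_of_intCast_eq_mul (mem_filter.mp hs).2
      (hps ▸ hslope p hp) (hqs ▸ hslope q hq)
    exact mem_unitOrbit_of_dvd hD (by exact_mod_cast hm) (hsol p hp) (hsol q hq) hb ha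

theorem card_solutions_le_mul_sqrtNegSum {D k : ℕ} (hD : 0 < D) (hk : k ≠ 0) :
    #(solutions D k) ≤ (if D = 1 then 4 else 2) * sqrtNegSum D k := by
  rw [sqrtNegSum, ArithmeticFunction.mul_apply, mul_sum]
  refine (card_solutions_le_sum hD hk).trans (sum_le_sum fun x hx => ?_)
  rw [mul_left_comm]
  have hx2 : x.2 ≠ 0 := Nat.ne_zero_of_mul_ne_zero_right
    ((Nat.mem_divisorsAntidiagonal.mp hx).1 ▸ hk)
  exact Nat.mul_le_mul_left _ (card_primitiveSolutions_le hD hx2)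

theorem card_solutions_le {D k : ℕ} (hD : Squarefree D) (hDpos : 0 < D) (hk : k ≠ 0) :
    #(solutions D k) ≤ 6 * #k.divisors := by
  have hconst : (if D = 1 then 4 else 2) * (if D % 4 = 3 then 3 else 1) ≤ 6 := by
    split_ifs <;> omega
  calc #(solutions D k)
      ≤ (if D = 1 then 4 else 2) * sqrtNegSum D k := card_solutions_le_mul_sqrtNegSum hDpos hk
    _ ≤ (if D = 1 then 4 else 2) * ((if D % 4 = 3 then 3 else 1) * #k.divisors) :=
        Nat.mul_le_mul_left _ (sqrtNegSum_le hD hk)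
    _ ≤ 6 * #k.divisors := by
        rw [← mul_assoc]
        exact Nat.mul_le_mul_right _ hconst

end SqAddMulSq

/-- For squarefree D > 0 and k > 0, the number of integer solutions to
x² + D y² = k is at most 6 τ(k). -/
theorem stmt_9 (D : ℕ) (hD : Squarefree D) (hDpos : 0 < D) (k : ℕ) (hk : 0 < k) :
    Set.ncard {p : ℤ × ℤ | p.1 ^ 2 + (D : ℤ) * p.2 ^ 2 = (k : ℤ)} ≤
      6 * (Nat.divisors k).card := by
  have hset : {p : ℤ × ℤ | p.1 ^ 2 + (D : ℤ) * p.2 ^ 2 = (k : ℤ)} = SqAddMulSq.solutions D k :=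
    Set.ext fun p => (SqAddMulSq.mem_solutions hDpos).symm
  rw [hset, Set.ncard_coe_finset]
  exact SqAddMulSq.card_solutions_le hD hDpos hk.ne'
end

section
/- Let α be an irrational real number of finite type τ, i.e., for every ε > 0 there is c > 0 with ‖qα‖ ≥ c/q^{τ+ε} for all positive integers q, where ‖t‖ is the distance from t to the nearest integer. Then for every ε > 0 there is a constant c' = c'(α,ε) such that Σ_{h=1}^m 1/‖hα‖ ≤ c'·m^{τ+ε} for all positive integers m. -/
/-!
Put `δ = c m^{-(τ+ε/2)}`. The type hypothesis gives `‖qα‖ ≥ δ` for `1 ≤ q ≤ m`, and since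
`aα - bα = (a - b)α`, the signed offsets `qα - round (qα)` are pairwise `δ`-separated and avoid
`(-δ, δ)`. Among such points, the `k`-th smallest positive one and the `k`-th largest negative one
have absolute value at least `kδ`, so the sum is at most `2δ⁻¹ H_m ≪ m^{τ+ε/2} log m`.
-/

/-- Distance from a real number to the nearest integer. -/
noncomputable def nint (t : ℝ) : ℝ := |t - round t|

open Finset Filter

lemma nint_le_half (t : ℝ) : nint t ≤ 1 / 2 := abs_sub_round t

lemma nint_sub_le (x y : ℝ) : nint (x - y) ≤ |(x - round x) - (y - round y)| := by
  have h := round_le (x - y) (round x - round y)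
  push_cast at h
  rwa [show x - y - (round x - round y : ℝ) = x - round x - (y - round y) by ring] at h

lemma Real.nonneg_of_forall_div_rpow_le {c b s : ℝ} (hc : 0 < c)
    (h : ∀ q : ℕ, 0 < q → c / (q : ℝ) ^ s ≤ b) : 0 ≤ s := by
  by_contra! hs
  have hlim : Tendsto (fun q : ℕ => c / (q : ℝ) ^ s) atTop atTop := by
    refine (((tendsto_rpow_atTop (neg_pos.mpr hs)).comp
      tendsto_natCast_atTop_atTop).const_mul_atTop hc).congr fun q => ?_
    simp only [Function.comp_apply, Real.rpow_neg q.cast_nonneg, div_eq_mul_inv]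
  obtain ⟨q, hqb, hq⟩ := ((hlim.eventually_gt_atTop b).and (eventually_gt_atTop 0)).exists
  exact (h q hq).not_gt hqb

lemma harmonic_mono : Monotone harmonic :=
  monotone_nat_of_le_succ fun n => by
    rw [harmonic_succ]; exact le_add_of_nonneg_right (by positivity)

lemma harmonic_le_one_add_inv_mul_rpow (n : ℕ) {t : ℝ} (ht : 0 < t) :
    (harmonic n : ℝ) ≤ (1 + t⁻¹) * (n : ℝ) ^ t := by
  rcases n.eq_zero_or_pos with rfl | hn
  · simp [Real.zero_rpow ht.ne']
  have hone : 1 ≤ (n : ℝ) ^ t := Real.one_le_rpow (by exact_mod_cast hn) ht.le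
  calc (harmonic n : ℝ) ≤ 1 + Real.log n := harmonic_le_one_add_log n
    _ ≤ 1 + t⁻¹ * (n : ℝ) ^ t := by
      rw [inv_mul_eq_div]; gcongr; exact Real.log_le_rpow_div n.cast_nonneg ht
    _ ≤ (1 + t⁻¹) * (n : ℝ) ^ t := by linarith

lemma Finset.card_le_of_separated {S : Finset ℝ} {δ a b : ℝ} (hδ : 0 < δ) (hab : a ≤ b)
    (hS : ∀ x ∈ S, x ∈ Set.Icc a b) (hsep : ∀ x ∈ S, ∀ y ∈ S, x ≠ y → δ ≤ |x - y|) :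
    (#S : ℝ) ≤ (b - a) / δ + 1 := by
  set n := ⌊(b - a) / δ⌋
  have hn : 0 ≤ n := Int.floor_nonneg.mpr (div_nonneg (sub_nonneg.mpr hab) hδ.le)
  have hcard : #S ≤ #(Icc 0 n) := by
    refine card_le_card_of_injOn (fun x => ⌊(x - a) / δ⌋) (fun x hx => ?_)
      (fun x hx y hy hxy => ?_)
    · obtain ⟨hax, hxb⟩ := hS x hx
      rw [coe_Icc, Set.mem_Icc]
      exact ⟨Int.floor_nonneg.mpr (div_nonneg (sub_nonneg.mpr hax) hδ.le),
        Int.floor_le_floor (by gcongr)⟩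
    · by_contra hne
      have h := Int.abs_sub_lt_one_of_floor_eq_floor hxy
      rw [← sub_div, sub_sub_sub_cancel_right, abs_div, abs_of_pos hδ, div_lt_one hδ] at h
      exact (hsep x hx y hy hne).not_gt h
  rw [Int.card_Icc, sub_zero] at hcard
  have hcast : (((n + 1).toNat : ℤ) : ℝ) = n + 1 := by
    rw [Int.toNat_of_nonneg (by omega)]; push_cast; ring
  calc (#S : ℝ) ≤ (n + 1).toNat := by exact_mod_cast hcard
    _ = n + 1 := by exact_mod_cast hcast
    _ ≤ (b - a) / δ + 1 := by gcongr; exact Int.floor_le _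

section Rank

variable {α : Type*} [LinearOrder α]

def Finset.rank (P : Finset α) (x : α) : ℕ := #(P.filter (· ≤ x))

lemma Finset.rank_strictMonoOn (P : Finset α) : StrictMonoOn P.rank P := by
  intro x _ y hy hxy
  refine card_lt_card ⟨fun z hz => mem_filter.mpr ⟨(mem_filter.mp hz).1,
    (mem_filter.mp hz).2.trans hxy.le⟩, fun hsub => ?_⟩
  exact hxy.not_ge (mem_filter.mp (hsub (mem_filter.mpr ⟨hy, le_rfl⟩))).2

lemma Finset.rank_mem_Icc {P : Finset α} {x : α} (hx : x ∈ P) : P.rank x ∈ Icc 1 #P :=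
  mem_Icc.mpr ⟨card_pos.mpr ⟨x, mem_filter.mpr ⟨hx, le_rfl⟩⟩, card_filter_le _ _⟩

lemma Finset.sum_inv_rank_le_harmonic (P : Finset α) :
    ∑ x ∈ P, ((P.rank x : ℕ) : ℝ)⁻¹ ≤ harmonic #P := by
  rw [harmonic_eq_sum_Icc, ← sum_image (f := fun j : ℕ => (j : ℝ)⁻¹) P.rank_strictMonoOn.injOn]
  push_cast
  refine sum_le_sum_of_subset_of_nonneg (fun j hj => ?_) fun _ _ _ => by positivity
  obtain ⟨x, hx, rfl⟩ := mem_image.mp hj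
  exact rank_mem_Icc hx

end Rank

lemma Finset.sum_inv_le_of_separated {P : Finset ℝ} {δ : ℝ} (hδ : 0 < δ) (hP : ∀ x ∈ P, δ ≤ x)
    (hsep : ∀ x ∈ P, ∀ y ∈ P, x ≠ y → δ ≤ |x - y|) :
    ∑ x ∈ P, x⁻¹ ≤ δ⁻¹ * harmonic #P := by
  have hrank : ∀ x ∈ P, (P.rank x : ℝ) ≤ x / δ := fun x hx => by
    have h := card_le_of_separated hδ (hP x hx) (S := P.filter (· ≤ x))
      (fun y hy => ⟨hP y (mem_filter.mp hy).1, (mem_filter.mp hy).2⟩)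
      (fun y hy z hz => hsep y (mem_filter.mp hy).1 z (mem_filter.mp hz).1)
    rwa [sub_div, div_self hδ.ne', sub_add_cancel] at h
  calc ∑ x ∈ P, x⁻¹ ≤ ∑ x ∈ P, δ⁻¹ * ((P.rank x : ℕ) : ℝ)⁻¹ := sum_le_sum fun x hx => by
        have hr : (0 : ℝ) < P.rank x := by exact_mod_cast (mem_Icc.mp (rank_mem_Icc hx)).1
        rw [← mul_inv]
        exact inv_anti₀ (by positivity) (by linarith [(le_div_iff₀ hδ).mp (hrank x hx)])
    _ = δ⁻¹ * ∑ x ∈ P, ((P.rank x : ℕ) : ℝ)⁻¹ := (mul_sum _ _ _).symm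
    _ ≤ δ⁻¹ * harmonic #P := by gcongr; exact P.sum_inv_rank_le_harmonic

lemma Finset.sum_inv_abs_le_of_separated {S : Finset ℝ} {δ : ℝ} (hδ : 0 < δ)
    (hS : ∀ x ∈ S, δ ≤ |x|) (hsep : ∀ x ∈ S, ∀ y ∈ S, x ≠ y → δ ≤ |x - y|) :
    ∑ x ∈ S, |x|⁻¹ ≤ 2 * δ⁻¹ * harmonic #S := by
  have half : ∀ T ⊆ S, ∀ σ : ℝ, |σ| = 1 → (∀ x ∈ T, |x| = σ * x) →
      ∑ x ∈ T, |x|⁻¹ ≤ δ⁻¹ * harmonic #S := by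
    intro T hTS σ hσ hT
    have habs_sub : ∀ x ∈ T, ∀ y ∈ T, |(|x| - |y|)| = |x - y| := fun x hx y hy => by
      rw [hT x hx, hT y hy, ← mul_sub, abs_mul, hσ, one_mul]
    have hinj : Set.InjOn abs (T : Set ℝ) := fun x hx y hy hxy => by
      have h := habs_sub x hx y hy
      rwa [hxy, sub_self, abs_zero, eq_comm, abs_eq_zero, sub_eq_zero] at h
    rw [← sum_image (f := fun y : ℝ => y⁻¹) hinj]
    calc ∑ y ∈ T.image abs, y⁻¹ ≤ δ⁻¹ * harmonic #(T.image abs) := by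
          refine sum_inv_le_of_separated hδ (fun y hy => ?_) fun y hy z hz hyz => ?_
          · obtain ⟨x, hx, rfl⟩ := mem_image.mp hy
            exact hS x (hTS hx)
          · obtain ⟨x, hx, rfl⟩ := mem_image.mp hy
            obtain ⟨x', hx', rfl⟩ := mem_image.mp hz
            rw [habs_sub x hx x' hx']
            exact hsep x (hTS hx) x' (hTS hx') (fun h => hyz (h ▸ rfl))
      _ ≤ δ⁻¹ * harmonic #S := by
          gcongr
          exact_mod_cast harmonic_mono ((card_image_le).trans (card_le_card hTS))
  rw [← sum_filter_add_sum_filter_not S (0 < ·), two_mul, add_mul]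
  gcongr
  · exact half _ (filter_subset _ _) 1 (by simp) fun x hx => by
      rw [one_mul, abs_of_pos (mem_filter.mp hx).2]
  · exact half _ (filter_subset _ _) (-1) (by simp) fun x hx => by
      rw [neg_one_mul, abs_of_nonpos (not_lt.mp (mem_filter.mp hx).2)]

lemma sum_one_div_nint_le {α δ : ℝ} {m : ℕ} (hδ : 0 < δ)
    (h : ∀ q ∈ Icc 1 m, δ ≤ nint (q * α)) :
    ∑ q ∈ Icc 1 m, 1 / nint (q * α) ≤ 2 * δ⁻¹ * harmonic m := by
  set w : ℕ → ℝ := fun q => q * α - round (q * α)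
  have hsep_of_lt : ∀ a ∈ Icc 1 m, ∀ b ∈ Icc 1 m, b < a → δ ≤ |w a - w b| := by
    intro a ha b hb hba
    have hab : a - b ∈ Icc 1 m := by rw [mem_Icc] at *; omega
    calc δ ≤ nint ((a - b : ℕ) * α) := h _ hab
      _ = nint (a * α - b * α) := by rw [Nat.cast_sub hba.le, sub_mul]
      _ ≤ |w a - w b| := nint_sub_le _ _
  have hsep : ∀ a ∈ Icc 1 m, ∀ b ∈ Icc 1 m, a ≠ b → δ ≤ |w a - w b| := by
    intro a ha b hb hab
    rcases hab.lt_or_gt with hlt | hlt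
    · rw [abs_sub_comm]; exact hsep_of_lt b hb a ha hlt
    · exact hsep_of_lt a ha b hb hlt
  have hinj : Set.InjOn w (Icc 1 m : Set ℕ) := fun a ha b hb hab => by
    by_contra hne
    have h := hsep a ha b hb hne
    rw [hab, sub_self, abs_zero] at h
    exact hδ.not_ge h
  calc ∑ q ∈ Icc 1 m, 1 / nint (q * α) = ∑ x ∈ (Icc 1 m).image w, |x|⁻¹ := by
        rw [sum_image hinj]; simp only [one_div, nint, w]
    _ ≤ 2 * δ⁻¹ * harmonic #((Icc 1 m).image w) := by
        refine sum_inv_abs_le_of_separated hδ (fun x hx => ?_) fun x hx y hy hxy => ?_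
        · obtain ⟨q, hq, rfl⟩ := mem_image.mp hx
          exact h q hq
        · obtain ⟨a, ha, rfl⟩ := mem_image.mp hx
          obtain ⟨b, hb, rfl⟩ := mem_image.mp hy
          exact hsep a ha b hb fun hab => hxy (hab ▸ rfl)
    _ ≤ 2 * δ⁻¹ * harmonic m := by
        gcongr
        exact_mod_cast harmonic_mono (card_image_le.trans (by simp))

theorem stmt_10_general (α : ℝ) (τ : ℝ)
    (htype : ∀ ε : ℝ, 0 < ε → ∃ c : ℝ, 0 < c ∧ ∀ q : ℕ, 0 < q →
      c / (q : ℝ) ^ (τ + ε) ≤ nint (q * α)) :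
    ∀ ε : ℝ, 0 < ε → ∃ c' : ℝ, 0 < c' ∧ ∀ m : ℕ, 1 ≤ m →
      ∑ h ∈ Finset.Icc 1 m, 1 / nint (h * α) ≤ c' * (m : ℝ) ^ (τ + ε) := by
  intro ε hε
  obtain ⟨c, hc, hq⟩ := htype (ε / 2) (by positivity)
  have hs : 0 ≤ τ + ε / 2 :=
    Real.nonneg_of_forall_div_rpow_le hc fun q hq0 => (hq q hq0).trans (nint_le_half _)
  refine ⟨2 / c * (1 + (ε / 2)⁻¹), by positivity, fun m hm => ?_⟩
  have hm0 : (0 : ℝ) < m := by exact_mod_cast hm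
  have hδ : ∀ q ∈ Icc 1 m, c / (m : ℝ) ^ (τ + ε / 2) ≤ nint (q * α) := fun q hqm => by
    obtain ⟨hq1, hqm⟩ := mem_Icc.mp hqm
    refine le_trans ?_ (hq q hq1)
    gcongr
  have hsplit : (m : ℝ) ^ (τ + ε) = (m : ℝ) ^ (τ + ε / 2) * (m : ℝ) ^ (ε / 2) := by
    rw [← Real.rpow_add hm0]; ring_nf
  calc ∑ q ∈ Icc 1 m, 1 / nint (q * α)
      ≤ 2 * (c / (m : ℝ) ^ (τ + ε / 2))⁻¹ * harmonic m := sum_one_div_nint_le (by positivity) hδ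
    _ ≤ 2 * (c / (m : ℝ) ^ (τ + ε / 2))⁻¹ * ((1 + (ε / 2)⁻¹) * (m : ℝ) ^ (ε / 2)) := by
        gcongr; exact harmonic_le_one_add_inv_mul_rpow m (by positivity)
    _ = 2 / c * (1 + (ε / 2)⁻¹) * (m : ℝ) ^ (τ + ε) := by
        rw [hsplit, inv_div]
        ring

/-- If α is an irrational of finite type τ, then for every ε > 0 there is c' > 0
with Σ_{h=1}^m 1/‖hα‖ ≤ c' m^{τ+ε} for all m ≥ 1. -/
theorem stmt_10 (α : ℝ) (hα : Irrational α) (τ : ℝ)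
    (htype : ∀ ε : ℝ, 0 < ε → ∃ c : ℝ, 0 < c ∧ ∀ q : ℕ, 0 < q →
      c / (q : ℝ) ^ (τ + ε) ≤ nint (q * α)) :
    ∀ ε : ℝ, 0 < ε → ∃ c' : ℝ, 0 < c' ∧ ∀ m : ℕ, 1 ≤ m →
      ∑ h ∈ Finset.Icc 1 m, 1 / nint (h * α) ≤ c' * (m : ℝ) ^ (τ + ε) :=
  stmt_10_general α τ htype
end

section
/- Let α be an irrational of finite type τ and β ∈ ℝ, and let x_n = αn + β. Then for every ε > 0 there exists a constant c = c(α,ε), independent of β, such that the discrepancy D_N of the sequence (x_n) satisfies D_N ≤ c·N^{−1/τ+ε}. -/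
/-!
The indicator of `[a, b)` at `{x}` equals `(b - a) + ({x - b} - 1/2) - ({x - a} - 1/2)`, so the
discrepancy is controlled by sawtooth sums `S(β, N) = ∑_{n<N} ({β + nα} - 1/2)`, to be bounded
uniformly in `β`. If `p/q` is in lowest terms and `|α - p/q| ≤ 1/q²`, the points `β + jα`, `j < q`,
lie within `1/q` of `β + jp/q`, whose fractional parts are the `({qβ} + k)/q`, `k < q`; comparing
floors gives `|S(β, q)| ≤ 2` for every block of `q` consecutive terms. Dirichlet provides such a
`p/q` with `q ≤ N`, and the type hypothesis with exponent `s = τ + ε` forces `q ≫ N^{1/s}` (and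
hence `τ ≥ 1`). Writing `N = mq + ρ` with `ρ ≤ N/2` gives `|S(N)| ≤ 2N/q + |S(ρ)|`, and induction
yields `|S(N)| ≪ N^{1 - 1/s}`, i.e. `D_N ≪ N^{-1/s} ≤ N^{-1/τ + ε}`.
-/

open Finset Filter

theorem sum_range_emod_add_mul {M : Type*} [AddCommMonoid M] (f : ℤ → M) {a : ℤ} {q : ℕ}
    (ha : IsCoprime (q : ℤ) a) (b : ℤ) :
    ∑ j ∈ range q, f ((b + j * a) % q) = ∑ k ∈ range q, f k := by
  rcases q.eq_zero_or_pos with rfl | hq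
  · simp
  have hq' : (0 : ℤ) < q := by exact_mod_cast hq
  set i : ℕ → ℕ := fun j => ((b + j * a) % q).toNat
  have hi : ∀ j, (i j : ℤ) = (b + j * a) % q := fun j =>
    Int.toNat_of_nonneg (Int.emod_nonneg _ hq'.ne')
  have maps : ∀ j ∈ range q, i j ∈ range q := fun j _ => by
    have := hi j ▸ Int.emod_lt_of_pos (b + j * a) hq'
    rw [mem_range]; omega
  have inj : Set.InjOn i (range q) := by
    intro j hj k hk hjk
    have hmul : (j : ℤ) * a ≡ k * a [ZMOD q] := by
      refine Int.ModEq.add_left_cancel' b ?_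
      rw [Int.ModEq, ← hi, ← hi, hjk]
    have hmod := Int.ModEq.cancel_right_div_gcd hq' hmul
    rw [Int.isCoprime_iff_gcd_eq_one.mp ha, Nat.cast_one, Int.ediv_one,
      Int.natCast_modEq_iff] at hmod
    exact hmod.eq_of_lt_of_lt (mem_range.mp hj) (mem_range.mp hk)
  refine sum_nbij i maps inj (surjOn_of_injOn_of_card_le i maps inj le_rfl) fun j _ => ?_
  rw [hi]

theorem Int.fract_intCast_add_div {m : ℤ} {q : ℕ} (hq : 0 < q) {t : ℝ} (ht₀ : 0 ≤ t) (ht₁ : t < 1) :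
    Int.fract ((m + t) / q) = ((m % q : ℤ) + t) / q := by
  have hq' : (0 : ℝ) < q := by exact_mod_cast hq
  have hlt : ((m % q : ℤ) : ℝ) + 1 ≤ q := by
    exact_mod_cast Int.emod_lt_of_pos m (by exact_mod_cast hq)
  have hnn : (0 : ℝ) ≤ ((m % q : ℤ) : ℝ) := by
    exact_mod_cast Int.emod_nonneg m (by exact_mod_cast hq.ne')
  refine Int.fract_eq_iff.mpr ⟨by positivity, (div_lt_one hq').mpr (by linarith), m / q, ?_⟩
  rw [← sub_div, add_sub_add_right_eq_sub, div_eq_iff hq'.ne', sub_eq_iff_eq_add']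
  exact_mod_cast (Int.emod_add_ediv_mul m q).symm

theorem sum_range_natCast_mul_two (n : ℕ) : (∑ k ∈ range n, (k : ℝ)) * 2 = n * (n - 1) := by
  rcases n.eq_zero_or_pos with rfl | hn
  · simp
  rw [← Nat.cast_sum, ← Nat.cast_pred hn]
  exact_mod_cast sum_range_id_mul_two n

theorem sum_fract_add_mul_rat (r : ℚ) (x : ℝ) :
    ∑ j ∈ range r.den, Int.fract (x + j * r) = Int.fract (r.den * x) + ((r.den : ℝ) - 1) / 2 := by
  have hq : (0 : ℝ) < r.den := by exact_mod_cast r.den_pos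
  have hcop : IsCoprime (r.den : ℤ) r.num := Int.isCoprime_iff_gcd_eq_one.mpr r.reduced.symm
  have hshift : ∀ j : ℕ,
      x + j * r = ((⌊r.den * x⌋ + j * r.num : ℤ) + Int.fract (r.den * x)) / r.den := by
    intro j
    have hfloor := Int.floor_add_fract ((r.den : ℝ) * x)
    rw [eq_div_iff hq.ne', Rat.cast_def]
    push_cast
    rw [add_right_comm, hfloor]
    field_simp
  simp_rw [hshift, Int.fract_intCast_add_div r.den_pos (Int.fract_nonneg _) (Int.fract_lt_one _)]
  rw [sum_range_emod_add_mul (fun k : ℤ => ((k : ℝ) + Int.fract (r.den * x)) / r.den) hcop,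
    ← sum_div, sum_add_distrib, sum_const, card_range, nsmul_eq_mul]
  push_cast
  have := sum_range_natCast_mul_two r.den
  field_simp
  linarith

theorem sum_floor_add_mul_rat (r : ℚ) (x : ℝ) :
    ∑ j ∈ range r.den, (⌊x + j * r⌋ : ℝ) =
      r.den * x + r * (∑ j ∈ range r.den, (j : ℝ)) - Int.fract (r.den * x) -
        ((r.den : ℝ) - 1) / 2 := by
  simp only [← Int.self_sub_fract, sum_sub_distrib, sum_add_distrib, sum_const, card_range,
    nsmul_eq_mul, ← sum_mul, sum_fract_add_mul_rat]
  ring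

theorem Int.fract_sub_eq_ite (x : ℝ) {c : ℝ} (hc₀ : 0 ≤ c) (hc₁ : c ≤ 1) :
    Int.fract (x - c) = Int.fract x - c + if Int.fract x < c then 1 else 0 := by
  have h₀ := Int.fract_nonneg x
  have h₁ := Int.fract_lt_one x
  rw [Int.fract_eq_iff]
  split_ifs with h
  · exact ⟨by linarith, by linarith, ⌊x⌋ - 1, by rw [Int.fract]; push_cast; ring⟩
  · exact ⟨by linarith, by linarith, ⌊x⌋, by rw [Int.fract]; ring⟩

theorem ite_fract_mem_Ico (x : ℝ) {a b : ℝ} (ha : 0 ≤ a) (hab : a ≤ b) (hb : b ≤ 1) :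
    (if Int.fract x ∈ Set.Ico a b then 1 else 0 : ℝ) =
      b - a + (Int.fract (x - b) - 1 / 2) - (Int.fract (x - a) - 1 / 2) := by
  rw [Int.fract_sub_eq_ite x (ha.trans hab) hb, Int.fract_sub_eq_ite x ha (hab.trans hb)]
  simp only [Set.mem_Ico]
  split_ifs <;> grind

theorem card_filter_fract_mem_Ico {ι : Type*} (s : Finset ι) (x : ι → ℝ) {a b : ℝ} (ha : 0 ≤ a)
    (hab : a ≤ b) (hb : b ≤ 1) :
    (#{i ∈ s | Int.fract (x i) ∈ Set.Ico a b} : ℝ) =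
      #s * (b - a) + ∑ i ∈ s, (Int.fract (x i - b) - 1 / 2) -
        ∑ i ∈ s, (Int.fract (x i - a) - 1 / 2) := by
  rw [natCast_card_filter, sum_congr rfl fun i _ => ite_fract_mem_Ico (x i) ha hab hb,
    sum_sub_distrib, sum_add_distrib, sum_const, nsmul_eq_mul]

noncomputable def sawtoothSum (α β : ℝ) (N : ℕ) : ℝ :=
  ∑ n ∈ range N, (Int.fract (β + n * α) - 1 / 2)

theorem sawtoothSum_add (α β : ℝ) (M N : ℕ) :
    sawtoothSum α β (M + N) = sawtoothSum α β M + sawtoothSum α (β + M * α) N := by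
  simp only [sawtoothSum, sum_range_add, Nat.cast_add, add_mul, add_assoc]

theorem abs_sawtoothSum_mul_le {α C : ℝ} {q : ℕ} (h : ∀ β, |sawtoothSum α β q| ≤ C) (m : ℕ)
    (β : ℝ) : |sawtoothSum α β (m * q)| ≤ m * C := by
  induction m generalizing β with
  | zero => simp [sawtoothSum]
  | succ m ih =>
    rw [Nat.succ_mul, sawtoothSum_add, Nat.cast_succ, add_one_mul]
    exact (abs_add_le _ _).trans (add_le_add (ih β) (h _))

theorem abs_sawtoothSum_den_le {α : ℝ} {r : ℚ} (hr : |α - r| ≤ 1 / (r.den : ℝ) ^ 2) (β : ℝ) :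
    |sawtoothSum α β r.den| ≤ 2 := by
  set q := r.den
  have hq : (0 : ℝ) < q := by exact_mod_cast r.den_pos
  set G := ∑ j ∈ range q, (j : ℝ)
  have hG : G * 2 = q * (q - 1) := sum_range_natCast_mul_two q
  have hdrift : ∀ j ∈ range q, |β + j * α - (β + j * r)| ≤ 1 / q := fun j hj => by
    have hj : (j : ℝ) ≤ q := by exact_mod_cast (mem_range.mp hj).le
    calc |β + j * α - (β + j * r)| = j * |α - r| := by
          rw [add_sub_add_left_eq_sub, ← mul_sub, abs_mul, Nat.abs_cast]
      _ ≤ q * (1 / q ^ 2) := by gcongr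
      _ = 1 / q := by field_simp
  have hlow : ∑ j ∈ range q, (⌊β - 1 / q + j * r⌋ : ℝ) ≤ ∑ j ∈ range q, (⌊β + j * α⌋ : ℝ) :=
    sum_le_sum fun j hj => by
      have := (abs_le.mp (hdrift j hj)).1
      exact Int.cast_le.mpr (Int.floor_mono (by linarith))
  have hupp : ∑ j ∈ range q, (⌊β + j * α⌋ : ℝ) ≤ ∑ j ∈ range q, (⌊β + 1 / q + j * r⌋ : ℝ) :=
    sum_le_sum fun j hj => by
      have := (abs_le.mp (hdrift j hj)).2
      exact Int.cast_le.mpr (Int.floor_mono (by linarith))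
  have hS : sawtoothSum α β q = q * β + α * G - (∑ j ∈ range q, (⌊β + j * α⌋ : ℝ)) - q / 2 := by
    simp only [sawtoothSum, ← Int.self_sub_floor, sum_sub_distrib, sum_add_distrib, sum_const,
      card_range, nsmul_eq_mul, ← sum_mul]
    ring
  rw [sum_floor_add_mul_rat] at hlow hupp
  have hGbound : |(α - r) * G| ≤ 1 / 2 := by
    have hG₀ : 0 ≤ G := sum_nonneg fun j _ => Nat.cast_nonneg j
    calc |(α - r) * G| = |α - r| * G := by rw [abs_mul, abs_of_nonneg hG₀]
      _ ≤ 1 / q ^ 2 * (q ^ 2 / 2) := by gcongr; linarith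
      _ = 1 / 2 := by field_simp
  have hqinv : (q : ℝ) * (1 / q) = 1 := by field_simp
  have hfract₀ := Int.fract_nonneg ((q : ℝ) * (β + 1 / q))
  have hfract₁ := Int.fract_lt_one ((q : ℝ) * (β - 1 / q))
  rw [abs_le] at hGbound ⊢
  constructor <;> linarith

theorem sum_Icc_fract_sub_half_eq_sawtoothSum (α β : ℝ) (N : ℕ) :
    ∑ n ∈ Icc 1 N, (Int.fract (α * n + β) - 1 / 2) = sawtoothSum α (β + α) N := by
  rw [← Ico_add_one_right_eq_Icc, sum_Ico_eq_sum_range, Nat.add_sub_cancel, sawtoothSum]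
  refine sum_congr rfl fun n _ => ?_
  push_cast
  congr 2
  ring

theorem Nat.two_mul_mod_le {N q : ℕ} (hq : 0 < q) (hqN : q ≤ N) : 2 * (N % q) ≤ N := by
  have := Nat.div_add_mod' N q
  have := Nat.mod_lt N hq
  have := Nat.le_mul_of_pos_left q (Nat.div_pos hqN hq)
  omega

theorem div_le_rpow_of_mul_le_rpow {c₀ s N q : ℝ} (hc₀ : 0 < c₀) (hs : 0 < s) (hN : 0 < N)
    (hq : 0 < q) (h : c₀ * N ≤ q ^ s) : N / q ≤ c₀ ^ (-s⁻¹) * N ^ (1 - s⁻¹) := by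
  have hroot : (c₀ * N) ^ s⁻¹ ≤ q := (Real.rpow_inv_le_iff_of_pos (by positivity) hq.le hs).mpr h
  calc N / q ≤ N / (c₀ * N) ^ s⁻¹ := by gcongr
    _ = c₀ ^ (-s⁻¹) * N ^ (1 - s⁻¹) := by
      rw [Real.mul_rpow hc₀.le hN.le, Real.rpow_neg hc₀.le, Real.rpow_sub hN, Real.rpow_one]
      field_simp

section DiophantineType

variable {α s c₀ : ℝ}

theorem exists_rat_approx_of_type (hty : ∀ q : ℕ, 0 < q → c₀ / (q : ℝ) ^ s ≤ nint (q * α))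
    {N : ℕ} (hN : 0 < N) :
    ∃ r : ℚ, |α - r| ≤ 1 / (r.den : ℝ) ^ 2 ∧ r.den ≤ N ∧ c₀ * N ≤ (r.den : ℝ) ^ s := by
  obtain ⟨r, hr, hden⟩ := Real.exists_rat_abs_sub_le_and_den_le α hN
  have hq : (0 : ℝ) < r.den := by exact_mod_cast r.den_pos
  have hN' : (r.den : ℝ) ≤ N := by exact_mod_cast hden
  have hden_sq : (r.den : ℝ) ^ 2 ≤ r.den * (N + 1) := by nlinarith
  have hnint : nint (r.den * α) ≤ 1 / N := calc
    nint (r.den * α) ≤ |r.den * α - r.num| := round_le _ _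
    _ = r.den * |α - r| := by
      rw [← abs_of_pos hq, ← abs_mul, abs_of_pos hq, Rat.cast_def]
      field_simp
    _ ≤ r.den * (1 / ((N + 1) * r.den)) := by gcongr
    _ ≤ 1 / N := by
      rw [mul_one_div, mul_comm, ← div_div, div_self hq.ne']
      gcongr; linarith
  refine ⟨r, hr.trans ?_, hden, ?_⟩
  · rw [mul_comm]
    exact one_div_le_one_div_of_le (by positivity) hden_sq
  · have := (hty r.den r.den_pos).trans hnint
    rwa [div_le_div_iff₀ (by positivity) (by positivity), one_mul] at this

theorem one_le_of_type (hc₀ : 0 < c₀) (hty : ∀ q : ℕ, 0 < q → c₀ / (q : ℝ) ^ s ≤ nint (q * α)) :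
    1 ≤ s := by
  by_contra! hs
  set t := max s 0
  have ht : t < 1 := max_lt hs one_pos
  have hsmall : ∀ᶠ N : ℕ in atTop, (N : ℝ) ^ (t - 1) < c₀ := by
    have := (tendsto_rpow_neg_atTop (sub_pos.mpr ht)).comp tendsto_natCast_atTop_atTop
    simpa [neg_sub] using this.eventually_lt_const hc₀
  obtain ⟨N, hNsmall, hN⟩ := (hsmall.and (eventually_gt_atTop 0)).exists
  obtain ⟨r, -, hden, hlarge⟩ := exists_rat_approx_of_type hty hN
  have hN' : (0 : ℝ) < N := by exact_mod_cast hN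
  have : c₀ * N ≤ (N : ℝ) ^ t := calc
    c₀ * N ≤ (r.den : ℝ) ^ s := hlarge
    _ ≤ (r.den : ℝ) ^ t :=
      Real.rpow_le_rpow_of_exponent_le (by exact_mod_cast r.den_pos) (le_max_left _ _)
    _ ≤ (N : ℝ) ^ t := by gcongr
  rw [Real.rpow_sub_one hN'.ne', div_lt_iff₀ hN'] at hNsmall
  linarith

theorem abs_sawtoothSum_le_of_type (hs : 1 < s) (hc₀ : 0 < c₀)
    (hty : ∀ q : ℕ, 0 < q → c₀ / (q : ℝ) ^ s ≤ nint (q * α)) :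
    ∃ A, 0 < A ∧ ∀ N β, |sawtoothSum α β N| ≤ A * (N : ℝ) ^ (1 - s⁻¹) := by
  set θ := 1 - s⁻¹
  have hθ : 0 < θ := sub_pos.mpr (inv_lt_one_of_one_lt₀ hs)
  set K := c₀ ^ (-s⁻¹)
  have hhalf : (1 / 2 : ℝ) ^ θ < 1 := Real.rpow_lt_one (by norm_num) (by norm_num) hθ
  refine ⟨2 * K / (1 - (1 / 2) ^ θ), div_pos (by positivity) (sub_pos.mpr hhalf), ?_⟩
  set A := 2 * K / (1 - (1 / 2 : ℝ) ^ θ)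
  have hA : 2 * K + A * (1 / 2) ^ θ = A := by
    have := (sub_pos.mpr hhalf).ne'
    simp only [A]
    field_simp
    ring
  intro N
  induction N using Nat.strong_induction_on with
  | _ N ih =>
  intro β
  rcases N.eq_zero_or_pos with rfl | hN
  · simp [sawtoothSum, Real.zero_rpow hθ.ne']
  obtain ⟨r, hr, hden, hlarge⟩ := exists_rat_approx_of_type hty hN
  set q := r.den
  have hq : 0 < q := r.den_pos
  have hN' : (0 : ℝ) < N := by exact_mod_cast hN
  have hmod : ((N % q : ℕ) : ℝ) ≤ 1 / 2 * N := by
    have : ((2 * (N % q) : ℕ) : ℝ) ≤ N := by exact_mod_cast Nat.two_mul_mod_le hq hden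
    push_cast at this
    linarith
  calc |sawtoothSum α β N|
      ≤ |sawtoothSum α β (N / q * q)| + |sawtoothSum α (β + ↑(N / q * q) * α) (N % q)| := by
        conv_lhs => rw [← Nat.div_add_mod' N q, sawtoothSum_add]
        exact abs_add_le _ _
    _ ≤ (N / q : ℕ) * 2 + A * ((N % q : ℕ) : ℝ) ^ θ :=
        add_le_add (abs_sawtoothSum_mul_le (abs_sawtoothSum_den_le hr) _ β)
          (ih _ ((Nat.mod_lt N hq).trans_le hden) _)
    _ ≤ K * (N : ℝ) ^ θ * 2 + A * ((1 / 2) ^ θ * (N : ℝ) ^ θ) := by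
        gcongr
        · exact Nat.cast_div_le.trans
            (div_le_rpow_of_mul_le_rpow hc₀ (by linarith) hN' (by exact_mod_cast hq) hlarge)
        · rw [← Real.mul_rpow (by norm_num) hN'.le]; gcongr
    _ = A * (N : ℝ) ^ θ := by linear_combination (N : ℝ) ^ θ * hA

end DiophantineType

theorem neg_inv_add_le (τ ε : ℝ) (hτ : 1 ≤ τ) (hε : 0 < ε) : -(τ + ε)⁻¹ ≤ -1 / τ + ε := by
  have h1 : 0 < τ := by linarith
  have : 1 / τ - (τ + ε)⁻¹ = ε / (τ * (τ + ε)) := by field_simp; ring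
  have : ε / (τ * (τ + ε)) ≤ ε := div_le_self hε.le (by nlinarith)
  rw [neg_div]; linarith

theorem stmt_13_general (α : ℝ) (τ : ℝ)
    (htype : ∀ ε : ℝ, 0 < ε → ∃ c₀ : ℝ, 0 < c₀ ∧ ∀ q : ℕ, 0 < q →
      c₀ / (q : ℝ) ^ (τ + ε) ≤ nint (q * α)) :
    ∀ ε : ℝ, 0 < ε → ∃ c : ℝ, 0 < c ∧ ∀ β : ℝ, ∀ N : ℕ, 1 ≤ N →
      ∀ a b : ℝ, 0 ≤ a → a < b → b ≤ 1 →
        |(((Finset.Icc 1 N).filter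
            (fun n : ℕ => Int.fract (α * (n : ℝ) + β) ∈ Set.Ico a b)).card : ℝ) / N - (b - a)|
          ≤ c * (N : ℝ) ^ (-1 / τ + ε) := by
  intro ε hε
  have hτ : 1 ≤ τ := le_of_forall_pos_le_add fun δ hδ =>
    let ⟨_, hc₀, hty⟩ := htype δ hδ
    one_le_of_type hc₀ hty
  obtain ⟨c₀, hc₀, hty⟩ := htype ε hε
  obtain ⟨A, hA, hS⟩ := abs_sawtoothSum_le_of_type (by linarith) hc₀ hty
  refine ⟨2 * A, by positivity, fun β N hN a b ha hab hb => ?_⟩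
  have hN' : (0 : ℝ) < N := by exact_mod_cast hN
  rw [card_filter_fract_mem_Ico _ _ ha hab.le hb, Nat.card_Icc, Nat.add_sub_cancel]
  simp only [add_sub_assoc, sum_Icc_fract_sub_half_eq_sawtoothSum]
  rw [add_div, mul_div_cancel_left₀ _ hN'.ne', add_sub_cancel_left, abs_div, abs_of_pos hN']
  calc |sawtoothSum α (β - b + α) N - sawtoothSum α (β - a + α) N| / N
      ≤ (A * (N : ℝ) ^ (1 - (τ + ε)⁻¹) + A * (N : ℝ) ^ (1 - (τ + ε)⁻¹)) / N := by
        gcongr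
        exact (abs_sub _ _).trans (add_le_add (hS N _) (hS N _))
    _ = 2 * A * (N : ℝ) ^ (-(τ + ε)⁻¹) := by
        rw [sub_eq_add_neg, Real.rpow_add hN', Real.rpow_one]
        field_simp
        ring
    _ ≤ 2 * A * (N : ℝ) ^ (-1 / τ + ε) := by
        gcongr
        · exact_mod_cast hN
        · exact neg_inv_add_le τ ε hτ hε

/-- If α is an irrational of finite type τ and x_n = αn + β, then the discrepancy
of (x_n) satisfies D_N ≤ c N^{−1/τ+ε} with c = c(α,ε) independent of β. -/
theorem stmt_13 (α : ℝ) (hα : Irrational α) (τ : ℝ)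
    (htype : ∀ ε : ℝ, 0 < ε → ∃ c₀ : ℝ, 0 < c₀ ∧ ∀ q : ℕ, 0 < q →
      c₀ / (q : ℝ) ^ (τ + ε) ≤ nint (q * α)) :
    ∀ ε : ℝ, 0 < ε → ∃ c : ℝ, 0 < c ∧ ∀ β : ℝ, ∀ N : ℕ, 1 ≤ N →
      ∀ a b : ℝ, 0 ≤ a → a < b → b ≤ 1 →
        |(((Finset.Icc 1 N).filter
            (fun n : ℕ => Int.fract (α * (n : ℝ) + β) ∈ Set.Ico a b)).card : ℝ) / N - (b - a)|
          ≤ c * (N : ℝ) ^ (-1 / τ + ε) :=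
  stmt_13_general α τ htype
end

section
/- Fix a nonzero ζ ∈ ℤ³ and write |ζ|² = 4^{a_ζ}·n₁^ζ with 4 ∤ n₁^ζ. If ξ ∈ ℤ³ satisfies 2⟨ξ,ζ⟩ = |ζ|², then writing |ξ|² = 4^a·n₁ with 4 ∤ n₁, one has a ≤ a_ζ. -/
/-! If `a > aζ`, then `ξ ∈ 2^(aζ+1) ℤ³` and `ζ ∈ 2^aζ ℤ³`, so `4^(aζ+1)` divides
`2⟨ξ, ζ⟩ = |ζ|² = 4^aζ n₁ζ`, forcing `4 ∣ n₁ζ`. -/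

theorem Int.sq_emod_four (x : ℤ) : x ^ 2 % 4 = if 2 ∣ x then 0 else 1 := by
  rcases Int.even_or_odd' x with ⟨k, rfl | rfl⟩
  · have : (2 * k) ^ 2 = 4 * k ^ 2 := by ring
    simp [this]
  · have : (2 * k + 1) ^ 2 = 4 * (k ^ 2 + k) + 1 := by ring
    rw [this, if_neg (by omega)]
    omega

theorem Int.two_dvd_of_four_dvd_sum_three_sq {x y z : ℤ} (h : 4 ∣ x ^ 2 + y ^ 2 + z ^ 2) :
    2 ∣ x ∧ 2 ∣ y ∧ 2 ∣ z := by
  have hx := Int.sq_emod_four x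
  have hy := Int.sq_emod_four y
  have hz := Int.sq_emod_four z
  split_ifs at hx hy hz <;> omega

theorem Int.two_pow_dvd_of_four_pow_dvd_sum_three_sq (k : ℕ) {x y z : ℤ}
    (h : 4 ^ k ∣ x ^ 2 + y ^ 2 + z ^ 2) : 2 ^ k ∣ x ∧ 2 ^ k ∣ y ∧ 2 ^ k ∣ z := by
  induction k generalizing x y z with
  | zero => simp
  | succ k ih =>
    obtain ⟨⟨x, rfl⟩, ⟨y, rfl⟩, ⟨z, rfl⟩⟩ :=
      Int.two_dvd_of_four_dvd_sum_three_sq ((dvd_pow_self 4 k.succ_ne_zero).trans h)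
    have hsum : (2 * x) ^ 2 + (2 * y) ^ 2 + (2 * z) ^ 2 = 4 * (x ^ 2 + y ^ 2 + z ^ 2) := by ring
    rw [hsum, pow_succ', mul_dvd_mul_iff_left four_ne_zero] at h
    obtain ⟨hx, hy, hz⟩ := ih h
    simp only [pow_succ']
    exact ⟨mul_dvd_mul_left 2 hx, mul_dvd_mul_left 2 hy, mul_dvd_mul_left 2 hz⟩

theorem stmt_15_general (ζ ξ : ℤ × ℤ × ℤ)
    (aζ : ℕ) (n₁ζ : ℤ) (hζdec : ζ.1 ^ 2 + ζ.2.1 ^ 2 + ζ.2.2 ^ 2 = 4 ^ aζ * n₁ζ)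
    (hζ4 : ¬ (4 : ℤ) ∣ n₁ζ)
    (a : ℕ) (n₁ : ℤ) (hξdec : ξ.1 ^ 2 + ξ.2.1 ^ 2 + ξ.2.2 ^ 2 = 4 ^ a * n₁)
    (hinner : 2 * (ξ.1 * ζ.1 + ξ.2.1 * ζ.2.1 + ξ.2.2 * ζ.2.2) =
      ζ.1 ^ 2 + ζ.2.1 ^ 2 + ζ.2.2 ^ 2) :
    a ≤ aζ := by
  by_contra! hlt
  obtain ⟨hξ₁, hξ₂, hξ₃⟩ := Int.two_pow_dvd_of_four_pow_dvd_sum_three_sq (aζ + 1)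
    (hξdec ▸ dvd_mul_of_dvd_left (pow_dvd_pow 4 hlt) n₁)
  obtain ⟨hζ₁, hζ₂, hζ₃⟩ := Int.two_pow_dvd_of_four_pow_dvd_sum_three_sq aζ
    (hζdec ▸ dvd_mul_right _ n₁ζ)
  have hpow : (4 : ℤ) ^ (aζ + 1) = 2 * (2 ^ (aζ + 1) * 2 ^ aζ) := by
    rw [show (4 : ℤ) = 2 ^ 2 by norm_num, ← pow_mul, ← pow_add, ← pow_succ']
    ring_nf
  have h4 : 4 ^ aζ * 4 ∣ 4 ^ aζ * n₁ζ := by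
    rw [← hζdec, ← hinner, ← pow_succ, hpow]
    exact mul_dvd_mul_left 2 <| dvd_add (dvd_add (mul_dvd_mul hξ₁ hζ₁) (mul_dvd_mul hξ₂ hζ₂))
      (mul_dvd_mul hξ₃ hζ₃)
  exact hζ4 ((mul_dvd_mul_iff_left (by positivity)).mp h4)

/-- If ζ ≠ 0 with |ζ|² = 4^{a_ζ} n₁^ζ (4 ∤ n₁^ζ), and ξ satisfies 2⟨ξ,ζ⟩ = |ζ|²,
then writing |ξ|² = 4^a n₁ with 4 ∤ n₁ one has a ≤ a_ζ. -/
theorem stmt_15 (ζ ξ : ℤ × ℤ × ℤ) (hζ : ζ ≠ 0)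
    (aζ : ℕ) (n₁ζ : ℤ) (hζdec : ζ.1 ^ 2 + ζ.2.1 ^ 2 + ζ.2.2 ^ 2 = 4 ^ aζ * n₁ζ)
    (hζ4 : ¬ (4 : ℤ) ∣ n₁ζ)
    (a : ℕ) (n₁ : ℤ) (hξdec : ξ.1 ^ 2 + ξ.2.1 ^ 2 + ξ.2.2 ^ 2 = 4 ^ a * n₁)
    (hξ4 : ¬ (4 : ℤ) ∣ n₁)
    (hinner : 2 * (ξ.1 * ζ.1 + ξ.2.1 * ζ.2.1 + ξ.2.2 * ζ.2.2) =
      ζ.1 ^ 2 + ζ.2.1 ^ 2 + ζ.2.2 ^ 2) :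
    a ≤ aζ :=
  stmt_15_general ζ ξ aζ n₁ζ hζdec hζ4 a n₁ hξdec hinner
end
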